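/- arXiv:2107.08625 — 2 statements merged into one kernel-verified Lean document; each statement's English description precedes it below -/
import Mathlib

section
/- Let V be a finitely generated regular L⁰(𝓕)-module, generated by n elements. Then there exists a partition {A₀, A₁, …, A_n} of Ω into 𝓕-measurable sets such that for each i ∈ {0, 1, …, n} with P(A_i) > 0, the module Ĩ_{A_i}·V is free of rank i over the algebra Ĩ_{A_i}·L⁰(𝓕): namely Ĩ_{A₀}·V = {0}, and for i ≥ 1 there exist v₁, …, v_i ∈ Ĩ_{A_i}·V such that every element of Ĩ_{A_i}·V can be written as ξ₁v₁ + ⋯ + ξ_i v_i with ξ₁, …, ξ_i ∈ L⁰(𝓕), and ξ₁v₁ + ⋯ + ξ_i v_i = 0 implies Ĩ_{A_i}·ξ_j = 0 for every j. Moreover each such A_i is unique up to P-null sets. -/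
open MeasureTheory

/-- `L⁰(𝓕)` is a commutative algebra; Mathlib lacks the ring instance on `AEEqFun`,
so we provide it by transporting proofs along the injection into germs. -/
noncomputable instance AEEqFun.instCommRingReal {Ω : Type*} [MeasurableSpace Ω]
    {P : Measure Ω} : CommRing (Ω →ₘ[P] ℝ) :=
  { AEEqFun.instAddCommGroup, AEEqFun.instCommMonoid with
    left_distrib := fun f g h => AEEqFun.toGerm_injective <| by
      simp only [AEEqFun.mul_toGerm, AEEqFun.add_toGerm, mul_add]
    right_distrib := fun f g h => AEEqFun.toGerm_injective <| by
      simp only [AEEqFun.mul_toGerm, AEEqFun.add_toGerm, add_mul]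
    zero_mul := fun f => AEEqFun.toGerm_injective <| by
      simp only [AEEqFun.mul_toGerm, AEEqFun.zero_toGerm, zero_mul]
    mul_zero := fun f => AEEqFun.toGerm_injective <| by
      simp only [AEEqFun.mul_toGerm, AEEqFun.zero_toGerm, mul_zero] }

namespace L0

variable {Ω : Type*} [MeasurableSpace Ω]

/-- `ind P A hA` is `Ĩ_A`, the equivalence class in `L⁰(𝓕)` of the indicator
function of the measurable set `A`. -/
noncomputable def ind (P : Measure Ω) (A : Set Ω) (hA : MeasurableSet A) : Ω →ₘ[P] ℝ :=
  AEEqFun.mk (A.indicator fun _ => (1 : ℝ))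
    (measurable_const.indicator hA).aestronglyMeasurable

variable (P : Measure Ω)

/-- An `L⁰(𝓕)`-module `V` is regular if `x = y` whenever there is a countable
measurable partition `{Aₙ}` of `Ω` with `Ĩ_{Aₙ}·x = Ĩ_{Aₙ}·y` for all `n`. -/
def IsRegular (V : Type*) [AddCommGroup V] [Module (Ω →ₘ[P] ℝ) V] : Prop :=
  ∀ x y : V,
    (∃ (A : ℕ → Set Ω) (hA : ∀ n, MeasurableSet (A n)),
      (∀ m n, m ≠ n → A m ∩ A n = ∅) ∧ (⋃ n, A n) = Set.univ ∧
      ∀ n, ind P (A n) (hA n) • x = ind P (A n) (hA n) • y) → x = y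

/-- `T : V → V'` is stable if `T(Ĩ_A·x + Ĩ_{Aᶜ}·y) = Ĩ_A·T(x) + Ĩ_{Aᶜ}·T(y)`. -/
def IsStable {V V' : Type*} [AddCommGroup V] [Module (Ω →ₘ[P] ℝ) V]
    [AddCommGroup V'] [Module (Ω →ₘ[P] ℝ) V'] (T : V → V') : Prop :=
  ∀ (x y : V) (A : Set Ω) (hA : MeasurableSet A),
    T (ind P A hA • x + ind P Aᶜ hA.compl • y)
      = ind P A hA • T x + ind P Aᶜ hA.compl • T y

/-- `T : V → V'` has the local property if `Ĩ_A·T(x) = Ĩ_A·T(Ĩ_A·x)`. -/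
def HasLocalProperty {V V' : Type*} [AddCommGroup V] [Module (Ω →ₘ[P] ℝ) V]
    [AddCommGroup V'] [Module (Ω →ₘ[P] ℝ) V'] (T : V → V') : Prop :=
  ∀ (x : V) (A : Set Ω) (hA : MeasurableSet A),
    ind P A hA • T x = ind P A hA • T (ind P A hA • x)

/-- `T : V → V'` is `L⁰`-affine if `T = S + b` with `S` an `L⁰`-linear map
(that is, a module homomorphism) and `b ∈ V'`. -/
def IsL0Affine {V V' : Type*} [AddCommGroup V] [Module (Ω →ₘ[P] ℝ) V]
    [AddCommGroup V'] [Module (Ω →ₘ[P] ℝ) V'] (T : V → V') : Prop :=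
  ∃ (S : V →ₗ[Ω →ₘ[P] ℝ] V') (b : V'), ∀ x : V, T x = S x + b

/-- The `L⁰`-line segment `[x,y] = {λx + (1−λ)y : λ ∈ L⁰(𝓕), 0 ≤ λ ≤ 1}`. -/
def seg {V : Type*} [AddCommGroup V] [Module (Ω →ₘ[P] ℝ) V] (x y : V) : Set V :=
  {z | ∃ lam : Ω →ₘ[P] ℝ, 0 ≤ lam ∧ lam ≤ 1 ∧ z = lam • x + (1 - lam) • y}

/-- The `L⁰`-line `l(x,y) = {λx + (1−λ)y : λ ∈ L⁰(𝓕)}`. -/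
def line {V : Type*} [AddCommGroup V] [Module (Ω →ₘ[P] ℝ) V] (x y : V) : Set V :=
  {z | ∃ lam : Ω →ₘ[P] ℝ, z = lam • x + (1 - lam) • y}

/-- `x, y ∈ V` are `L⁰(𝓕)`-independent if `ξx + ηy = 0` implies `ξ = η = 0`. -/
def Indep {V : Type*} [AddCommGroup V] [Module (Ω →ₘ[P] ℝ) V] (x y : V) : Prop :=
  ∀ ξ η : Ω →ₘ[P] ℝ, ξ • x + η • y = 0 → ξ = 0 ∧ η = 0

/-- `x ∈ V` has full support if `Ĩ_A·x = 0` implies `P(A) = 0`. -/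
def FullSupport {V : Type*} [AddCommGroup V] [Module (Ω →ₘ[P] ℝ) V] (x : V) : Prop :=
  ∀ (A : Set Ω) (hA : MeasurableSet A), ind P A hA • x = 0 → P A = 0

end L0

/-- `Ĩ_A·V` is a free module of rank `k` over `Ĩ_A·L⁰(𝓕)`: there are `v₁, …, v_k`
in `Ĩ_A·V` such that every element of `Ĩ_A·V` is an `L⁰(𝓕)`-linear combination of
them, and `ξ₁v₁ + ⋯ + ξ_k v_k = 0` forces `Ĩ_A·ξ_j = 0` for all `j`. -/
def L0.FreeRankOn {Ω : Type*} [MeasurableSpace Ω] (P : Measure Ω)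
    (V : Type*) [AddCommGroup V] [Module (Ω →ₘ[P] ℝ) V]
    (A : Set Ω) (hA : MeasurableSet A) (k : ℕ) : Prop :=
  ∃ v : Fin k → V, (∀ j, L0.ind P A hA • v j = v j) ∧
    (∀ u : V, ∃ ξ : Fin k → (Ω →ₘ[P] ℝ), L0.ind P A hA • u = ∑ j, ξ j • v j) ∧
    (∀ ξ : Fin k → (Ω →ₘ[P] ℝ), (∑ j, ξ j • v j) = 0 →
      ∀ j, L0.ind P A hA * ξ j = 0)

section Toolkit

open L0 Set

variable {Ω : Type*} [MeasurableSpace Ω] {P : Measure Ω}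

namespace L0

lemma coeFn_ind (A : Set Ω) (hA : MeasurableSet A) :
    ⇑(ind P A hA) =ᵐ[P] A.indicator (fun _ => (1:ℝ)) :=
  AEEqFun.coeFn_mk _ _

lemma ind_mul_ind (A B : Set Ω) (hA : MeasurableSet A) (hB : MeasurableSet B) :
    ind P A hA * ind P B hB = ind P (A ∩ B) (hA.inter hB) := by
  apply AEEqFun.ext
  filter_upwards [AEEqFun.coeFn_mul (ind P A hA) (ind P B hB), coeFn_ind A hA,
    coeFn_ind B hB, coeFn_ind (A ∩ B) (hA.inter hB)] with ω h1 h2 h3 h4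
  rw [h1, h4]
  simp only [Pi.mul_apply, h2, h3]
  by_cases hia : ω ∈ A <;> by_cases hib : ω ∈ B <;>
    simp [Set.indicator_apply, hia, hib, Set.mem_inter_iff]

lemma ind_empty : ind P (∅ : Set Ω) MeasurableSet.empty = 0 := by
  apply AEEqFun.ext
  filter_upwards [coeFn_ind (∅ : Set Ω) MeasurableSet.empty,
    AEEqFun.coeFn_zero (α := Ω) (μ := P) (β := ℝ)] with ω h1 h2
  simp [h1, h2]

lemma ind_univ : ind P (Set.univ : Set Ω) MeasurableSet.univ = 1 := by
  apply AEEqFun.ext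
  filter_upwards [coeFn_ind (Set.univ : Set Ω) MeasurableSet.univ,
    AEEqFun.coeFn_one (α := Ω) (μ := P) (β := ℝ)] with ω h1 h2
  simp [h1, h2]

end L0

namespace L0

open scoped ENNReal

lemma ind_congr_set {A B : Set Ω} (h : A = B) (hA : MeasurableSet A) (hB : MeasurableSet B) :
    ind P A hA = ind P B hB := by subst h; rfl

lemma ind_eq_zero_iff (A : Set Ω) (hA : MeasurableSet A) :
    ind P A hA = 0 ↔ P A = 0 := by
  constructor
  · intro h
    have h1 : ⇑(ind P A hA) =ᵐ[P] ⇑(0 : Ω →ₘ[P] ℝ) := by rw [h]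
    have h2 : ∀ᵐ ω ∂P, A.indicator (fun _ => (1:ℝ)) ω = 0 := by
      filter_upwards [h1, coeFn_ind A hA, AEEqFun.coeFn_zero (α := Ω) (μ := P) (β := ℝ)]
        with ω h1 h2 h3
      rw [← h2, h1, h3]; rfl
    rw [MeasureTheory.ae_iff] at h2
    refine measure_mono_null ?_ h2
    intro ω hω
    simp only [Set.mem_setOf_eq, Set.indicator_of_mem hω]
    exact one_ne_zero
  · intro h
    apply AEEqFun.ext
    filter_upwards [coeFn_ind A hA, AEEqFun.coeFn_zero (α := Ω) (μ := P) (β := ℝ),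
      measure_eq_zero_iff_ae_notMem.mp h] with ω h1 h2 h3
    rw [h1, h2, Set.indicator_of_notMem h3]; rfl

/-- `L⁰` itself is regular: equality can be tested on a countable measurable cover. -/
lemma l0_regular (D : ℕ → Set Ω) (hD : ∀ n, MeasurableSet (D n))
    (hcov : (⋃ n, D n) = Set.univ) {ξ η : Ω →ₘ[P] ℝ}
    (h : ∀ n, ind P (D n) (hD n) * ξ = ind P (D n) (hD n) * η) : ξ = η := by
  apply AEEqFun.ext
  have H : ∀ n, ∀ᵐ ω ∂P,
      (D n).indicator (fun _ => (1:ℝ)) ω * ξ ω = (D n).indicator (fun _ => (1:ℝ)) ω * η ω := by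
    intro n
    have h1 : ⇑(ind P (D n) (hD n) * ξ) =ᵐ[P] ⇑(ind P (D n) (hD n) * η) := by rw [h n]
    filter_upwards [h1, AEEqFun.coeFn_mul (ind P (D n) (hD n)) ξ,
      AEEqFun.coeFn_mul (ind P (D n) (hD n)) η, coeFn_ind (D n) (hD n)] with ω e1 e2 e3 e4
    have := e2.symm.trans (e1.trans e3)
    simpa [e4] using this
  rw [← MeasureTheory.ae_all_iff] at H
  filter_upwards [H] with ω hω
  obtain ⟨n, hn⟩ : ∃ n, ω ∈ D n := by
    have : ω ∈ ⋃ n, D n := hcov ▸ Set.mem_univ ω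
    simpa using this
  have := hω n
  simpa [Set.indicator_of_mem hn] using this

/-- Gluing of countably many elements of `L⁰` along a measurable cover. -/
lemma exists_glue (D : ℕ → Set Ω) (hD : ∀ n, MeasurableSet (D n))
    (hcov : ∀ ω, ∃ n, ω ∈ D n) (hdisj : ∀ m n, m ≠ n → D m ∩ D n = ∅)
    (ξ : ℕ → (Ω →ₘ[P] ℝ)) :
    ∃ θ : Ω →ₘ[P] ℝ, ∀ n, ind P (D n) (hD n) * θ = ind P (D n) (hD n) * ξ n := by
  classical
  set g : Ω → ℝ := fun ω => ξ (Nat.find (hcov ω)) ω with hg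
  have hgm : Measurable g :=
    Measurable.find (p := fun n ω => ω ∈ D n) (fun n => (ξ n).measurable) (fun n => hD n) hcov
  refine ⟨AEEqFun.mk g hgm.aestronglyMeasurable, fun n => ?_⟩
  apply AEEqFun.ext
  filter_upwards [AEEqFun.coeFn_mul (ind P (D n) (hD n)) (AEEqFun.mk g hgm.aestronglyMeasurable),
    AEEqFun.coeFn_mul (ind P (D n) (hD n)) (ξ n), coeFn_ind (D n) (hD n),
    AEEqFun.coeFn_mk g hgm.aestronglyMeasurable] with ω e1 e2 e3 e4
  rw [e1, e2]
  simp only [Pi.mul_apply, e3, e4]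
  by_cases hω : ω ∈ D n
  · have hfind : Nat.find (hcov ω) = n := by
      by_contra hne
      have h1 : ω ∈ D (Nat.find (hcov ω)) := Nat.find_spec (hcov ω)
      exact absurd (Set.mem_inter h1 hω)
        (by rw [hdisj _ n hne]; exact Set.notMem_empty ω)
    rw [hg]; simp only [hfind]
  · simp [Set.indicator_of_notMem hω]

/-- Pointwise "pseudo-inverse" in `L⁰`. -/
noncomputable def pinv (ξ : Ω →ₘ[P] ℝ) : Ω →ₘ[P] ℝ :=
  AEEqFun.mk (fun ω => (ξ ω)⁻¹) ξ.measurable.inv.aestronglyMeasurable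

lemma ind_mul_pinv_mul (C : Set Ω) (hC : MeasurableSet C) (ξ : Ω →ₘ[P] ℝ)
    (h : ∀ ω ∈ C, ξ ω ≠ 0) :
    ind P C hC * (pinv ξ * ξ) = ind P C hC := by
  apply AEEqFun.ext
  have hp : ⇑(pinv ξ) =ᵐ[P] fun ω => (ξ ω)⁻¹ := AEEqFun.coeFn_mk _ _
  filter_upwards [AEEqFun.coeFn_mul (ind P C hC) (pinv ξ * ξ),
    AEEqFun.coeFn_mul (pinv ξ) ξ, coeFn_ind C hC, hp] with ω e1 e2 e3 e4
  rw [e1]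
  simp only [Pi.mul_apply, e2, e3, e4]
  by_cases hω : ω ∈ C
  · simp [Set.indicator_of_mem hω, inv_mul_cancel₀ (h ω hω)]
  · simp [Set.indicator_of_notMem hω]

/-- A countable subfamily of `𝒞` whose union is `P`-essentially maximal. -/
lemma exists_maximal_union [IsFiniteMeasure P] (𝒞 : Set (Set Ω))
    (hmeas : ∀ C ∈ 𝒞, MeasurableSet C) (hne : (∅ : Set Ω) ∈ 𝒞) :
    ∃ C : ℕ → Set Ω, (∀ n, C n ∈ 𝒞) ∧ ∀ D ∈ 𝒞, MeasurableSet D → P (D \ ⋃ n, C n) = 0 := by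
  classical
  set U : Set (Set Ω) := {S | ∃ f : ℕ → Set Ω, (∀ n, f n ∈ 𝒞) ∧ S = ⋃ n, f n} with hU
  set T : Set ℝ≥0∞ := P '' U with hT
  have hTne : T.Nonempty := ⟨P (⋃ _ : ℕ, (∅ : Set Ω)), ⟨_, ⟨fun _ => ∅, fun _ => hne, rfl⟩, rfl⟩⟩
  have hbdd : BddAbove T := ⟨P Set.univ, by
    rintro x ⟨S, _, rfl⟩; exact measure_mono (Set.subset_univ S)⟩
  obtain ⟨u, hmono, htend, hmem⟩ := exists_seq_tendsto_sSup hTne hbdd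
  choose S hSU hSu using hmem
  choose f hf hSf using hSU
  refine ⟨fun k => f (Nat.unpair k).1 (Nat.unpair k).2, fun k => hf _ _, ?_⟩
  set B := ⋃ k, f (Nat.unpair k).1 (Nat.unpair k).2 with hBdef
  have hBU : B ∈ U := ⟨_, fun k => hf _ _, rfl⟩
  have hsub : ∀ n, S n ⊆ B := by
    intro n
    rw [hSf n]
    refine Set.iUnion_subset fun m => ?_
    intro ω hω
    exact Set.mem_iUnion.mpr ⟨Nat.pair n m, by simpa [Nat.unpair_pair] using hω⟩
  have hPBle : sSup T ≤ P B := by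
    refine le_of_tendsto htend (Filter.Eventually.of_forall fun n => ?_)
    rw [← hSu n]; exact measure_mono (hsub n)
  intro D hD hDmeas
  set B' := D ∪ B with hB'
  have hB'U : B' ∈ U := by
    obtain ⟨g, hg, hBg⟩ := hBU
    refine ⟨fun k => Nat.casesOn k D g, fun k => by cases k with
      | zero => exact hD
      | succ m => exact hg m, ?_⟩
    rw [hB']
    ext ω
    constructor
    · rintro (hω | hω)
      · exact Set.mem_iUnion.mpr ⟨0, hω⟩
      · rw [hBg] at hω
        obtain ⟨m, hm⟩ := Set.mem_iUnion.mp hω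
        exact Set.mem_iUnion.mpr ⟨m + 1, hm⟩
    · intro hω
      obtain ⟨k, hk⟩ := Set.mem_iUnion.mp hω
      cases k with
      | zero => exact Or.inl hk
      | succ m => exact Or.inr (hBg ▸ Set.mem_iUnion.mpr ⟨m, hk⟩)
  have h1 : P B' ≤ P B := le_trans (le_csSup hbdd ⟨B', hB'U, rfl⟩) hPBle
  have hBmeas : MeasurableSet B := MeasurableSet.iUnion fun k => hmeas _ (hf _ _)
  have h2 : P B + P (D \ B) = P B' := by
    rw [← measure_union disjoint_sdiff_right (hDmeas.diff hBmeas)]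
    congr 1
    rw [Set.union_diff_self, Set.union_comm]
  have h3 : P B + P (D \ B) ≤ P B + 0 := by
    rw [add_zero, h2]; exact h1
  exact le_antisymm ((ENNReal.add_le_add_iff_left (measure_ne_top P B)).mp h3) zero_le

end L0

namespace L0

lemma ind_mul_ind_of_subset {A B : Set Ω} (hA : MeasurableSet A) (hB : MeasurableSet B)
    (h : A ⊆ B) : ind P A hA * ind P B hB = ind P A hA := by
  rw [ind_mul_ind, ind_congr_set (Set.inter_eq_self_of_subset_left h) (hA.inter hB) hA]

lemma ind_mul_ind_empty {A B : Set Ω} (hA : MeasurableSet A) (hB : MeasurableSet B)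
    (h : A ∩ B = ∅) : ind P A hA * ind P B hB = 0 := by
  rw [ind_mul_ind, ind_congr_set h (hA.inter hB) MeasurableSet.empty, ind_empty]

variable {V : Type*} [AddCommGroup V] [Module (Ω →ₘ[P] ℝ) V]

lemma ind_smul_ind_smul (A B : Set Ω) (hA : MeasurableSet A) (hB : MeasurableSet B) (v : V) :
    ind P A hA • (ind P B hB • v) = ind P (A ∩ B) (hA.inter hB) • v := by
  rw [← mul_smul, ind_mul_ind]

lemma ind_smul_ind_smul_of_subset {A B : Set Ω} (hA : MeasurableSet A) (hB : MeasurableSet B)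
    (h : A ⊆ B) (v : V) : ind P A hA • (ind P B hB • v) = ind P A hA • v := by
  rw [← mul_smul, ind_mul_ind_of_subset hA hB h]

lemma ind_smul_ind_smul_empty {A B : Set Ω} (hA : MeasurableSet A) (hB : MeasurableSet B)
    (h : A ∩ B = ∅) (v : V) : ind P A hA • (ind P B hB • v) = 0 := by
  rw [← mul_smul, ind_mul_ind_empty hA hB h, zero_smul]

lemma smul_comm_l0 (ξ η : Ω →ₘ[P] ℝ) (v : V) : ξ • (η • v) = η • (ξ • v) := by
  rw [← mul_smul, mul_comm, mul_smul]

lemma freeRankOn_congr {A B : Set Ω} (h : A = B) {hA : MeasurableSet A}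
    {hB : MeasurableSet B} {k : ℕ} (hf : FreeRankOn P V A hA k) : FreeRankOn P V B hB k := by
  subst h; exact hf

theorem existsPartition [IsProbabilityMeasure P] (hV : IsRegular P V) (n : ℕ) :
    ∀ (G : Set Ω) (hG : MeasurableSet G) (w : Fin n → V),
      (∀ v : V, ∃ ξ : Fin n → (Ω →ₘ[P] ℝ),
        ind P G hG • v = ∑ i, ξ i • (ind P G hG • w i)) →
      ∃ (A : Fin (n+1) → Set Ω) (hA : ∀ i, MeasurableSet (A i)),
        (∀ i j, i ≠ j → A i ∩ A j = ∅) ∧ (⋃ i, A i) = G ∧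
        ∀ i : Fin (n+1), FreeRankOn P V (A i) (hA i) i.val := by
  induction n with
  | zero =>
    intro G hG w hw
    have hone : ∀ i j : Fin (0+1), i = j := fun i j =>
      Fin.ext (by have := i.isLt; have := j.isLt; omega)
    refine ⟨fun _ => G, fun _ => hG, fun i j hij => absurd (hone i j) hij,
      by rw [Set.iUnion_const], fun i => ?_⟩
    obtain rfl : i = 0 := hone i 0
    refine ⟨Fin.elim0, fun j => j.elim0, fun u => ⟨Fin.elim0, ?_⟩, fun ξ _ j => j.elim0⟩
    obtain ⟨ξ, hξ⟩ := hw u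
    simpa using hξ
  | succ n IH =>
    intro G hG w hw
    classical
    set e : Ω →ₘ[P] ℝ := ind P G hG with he
    set 𝒞 : Set (Set Ω) := {C | MeasurableSet C ∧ C ⊆ G ∧
      ∃ (ξ : Fin (n+1) → (Ω →ₘ[P] ℝ)) (k : Fin (n+1)),
        (∑ i, ξ i • (e • w i)) = 0 ∧ ∀ ω ∈ C, ξ k ω ≠ 0} with h𝒞
    have hmeas𝒞 : ∀ C ∈ 𝒞, MeasurableSet C := fun C hC => hC.1
    have hempty : (∅ : Set Ω) ∈ 𝒞 :=
      ⟨MeasurableSet.empty, Set.empty_subset _, 0, 0, by simp,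
        fun ω h => absurd h (Set.notMem_empty ω)⟩
    obtain ⟨C, hC𝒞, hCmax⟩ := exists_maximal_union (P := P) 𝒞 hmeas𝒞 hempty
    have hCmeas : ∀ m, MeasurableSet (C m) := fun m => (hC𝒞 m).1
    have hCG : ∀ m, C m ⊆ G := fun m => (hC𝒞 m).2.1
    choose ξr kr hrel hsupp using fun m => (hC𝒞 m).2.2
    set B : Set Ω := ⋃ m, C m with hBdef
    have hBmeas : MeasurableSet B := MeasurableSet.iUnion hCmeas
    have hBG : B ⊆ G := Set.iUnion_subset hCG
    set D : ℕ → Set Ω := disjointed C with hDdef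
    have hDmeas : ∀ m, MeasurableSet (D m) := MeasurableSet.disjointed hCmeas
    have hDsub : ∀ m, D m ⊆ C m := fun m => disjointed_subset C m
    have hDunion : (⋃ m, D m) = B := iUnion_disjointed
    have hDB : ∀ m, D m ⊆ B := fun m => hDunion ▸ Set.subset_iUnion D m
    have hDG : ∀ m, D m ⊆ G := fun m => (hDsub m).trans (hCG m)
    have hDdisj : ∀ m l, m ≠ l → D m ∩ D l = ∅ := fun m l h =>
      Set.disjoint_iff_inter_eq_empty.mp (disjoint_disjointed C h)
    -- the full cover used for gluing and regularity
    set D' : ℕ → Set Ω := fun m => Nat.casesOn m Bᶜ D with hD'def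
    have hD'meas : ∀ m, MeasurableSet (D' m) := fun m => by
      cases m with
      | zero => exact hBmeas.compl
      | succ l => exact hDmeas l
    have hD'disj : ∀ m l, m ≠ l → D' m ∩ D' l = ∅ := by
      intro m l h
      cases m with
      | zero => cases l with
        | zero => exact absurd rfl h
        | succ l' =>
          apply Set.eq_empty_of_subset_empty
          rintro ω ⟨h1, h2⟩
          exact absurd (hDB l' h2) h1
      | succ m' => cases l with
        | zero =>
          apply Set.eq_empty_of_subset_empty
          rintro ω ⟨h1, h2⟩
          exact absurd (hDB m' h1) h2
        | succ l' => exact hDdisj m' l' (fun hc => h (by rw [hc]))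
    have hD'cov : (⋃ m, D' m) = Set.univ := by
      apply Set.eq_univ_of_forall
      intro ω
      by_cases hω : ω ∈ B
      · rw [← hDunion] at hω
        obtain ⟨m, hm⟩ := Set.mem_iUnion.mp hω
        exact Set.mem_iUnion.mpr ⟨m + 1, hm⟩
      · exact Set.mem_iUnion.mpr ⟨0, hω⟩
    have hD'cov' : ∀ ω, ∃ m, ω ∈ D' m := fun ω => by
      have : ω ∈ ⋃ m, D' m := hD'cov ▸ Set.mem_univ ω
      exact Set.mem_iUnion.mp this
    set iD : ℕ → (Ω →ₘ[P] ℝ) := fun m => ind P (D m) (hDmeas m) with hiD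
    -- inverses of pivot coefficients
    set θ : ℕ → (Ω →ₘ[P] ℝ) := fun m => pinv (ξr m (kr m)) with hθdef
    have hθ : ∀ m, iD m * (θ m * ξr m (kr m)) = iD m := fun m =>
      ind_mul_pinv_mul (D m) (hDmeas m) _ (fun ω hω => hsupp m ω (hDsub m hω))
    set c : ℕ → Fin (n+1) → (Ω →ₘ[P] ℝ) := fun m i => -(θ m * ξr m i) with hcdef
    -- local elimination of the pivot generator
    have helim : ∀ m, iD m • (e • w (kr m)) =
        ∑ j : Fin n, (iD m * c m ((kr m).succAbove j)) • (e • w ((kr m).succAbove j)) := by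
      intro m
      have h1 : ∑ i, (iD m * (θ m * ξr m i)) • (e • w i) = 0 := by
        have h0 : ∑ i, (iD m * (θ m * ξr m i)) • (e • w i)
            = (iD m * θ m) • ∑ i, ξr m i • (e • w i) := by
          rw [Finset.smul_sum]
          apply Finset.sum_congr rfl
          intro i _
          conv_rhs => rw [← mul_smul]
          rw [mul_assoc]
        rw [h0, hrel m, smul_zero]
      rw [Fin.sum_univ_succAbove
        (fun i => (iD m * (θ m * ξr m i)) • (e • w i)) (kr m), hθ m] at h1
      have h2 := eq_neg_of_add_eq_zero_left h1
      rw [h2, ← Finset.sum_neg_distrib]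
      apply Finset.sum_congr rfl
      intro j _
      rw [← neg_smul]
      congr 1
      simp only [hcdef]
      ring
    -- glued coefficients defining the new generators
    set seqγ : Fin n → Fin (n+1) → ℕ → (Ω →ₘ[P] ℝ) := fun j i m' =>
      Nat.casesOn m' 0 (fun m => if (kr m).succAbove j = i then 1 else 0) with hseqγ
    have hγex : ∀ (j : Fin n) (i : Fin (n+1)), ∃ θ' : Ω →ₘ[P] ℝ, ∀ m',
        ind P (D' m') (hD'meas m') * θ' = ind P (D' m') (hD'meas m') * seqγ j i m' :=
      fun j i => exists_glue D' hD'meas hD'cov' hD'disj (seqγ j i)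
    choose γ hγ using hγex
    set u : Fin n → V := fun j => ∑ i, γ j i • (e • w i) with hu
    -- behaviour of the new generators on the pieces
    have hindu : ∀ m j, iD m • u j = iD m • (e • w ((kr m).succAbove j)) := by
      intro m j
      rw [hu]
      simp only
      rw [Finset.smul_sum]
      have hterm : ∀ i : Fin (n+1), iD m • (γ j i • (e • w i))
          = (if (kr m).succAbove j = i then iD m • (e • w i) else 0) := by
        intro i
        rw [← mul_smul]
        have h3 : iD m * γ j i = iD m * (if (kr m).succAbove j = i then 1 else 0) :=
          hγ j i (m + 1)
        rw [h3]
        split_ifs <;> simp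
      rw [Finset.sum_congr rfl (fun i _ => hterm i), Finset.sum_ite_eq]
      simp
    have hinduC : ∀ j, ind P Bᶜ hBmeas.compl • u j = 0 := by
      intro j
      rw [hu]
      simp only
      rw [Finset.smul_sum]
      apply Finset.sum_eq_zero
      intro i _
      rw [← mul_smul]
      have h0 : ind P Bᶜ hBmeas.compl * γ j i = ind P Bᶜ hBmeas.compl * 0 := hγ j i 0
      rw [h0, mul_zero, zero_smul]
    have hγB : ∀ j i, ind P B hBmeas * γ j i = γ j i := by
      intro j i
      apply l0_regular D' hD'meas hD'cov
      intro m'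
      cases m' with
      | zero =>
        have h0 : ind P Bᶜ hBmeas.compl * γ j i = ind P Bᶜ hBmeas.compl * 0 := hγ j i 0
        show ind P Bᶜ hBmeas.compl * (ind P B hBmeas * γ j i) = ind P Bᶜ hBmeas.compl * γ j i
        rw [← mul_assoc, ind_mul_ind_empty _ _ (Set.compl_inter_self B), zero_mul, h0, mul_zero]
      | succ m =>
        show iD m * (ind P B hBmeas * γ j i) = iD m * γ j i
        rw [← mul_assoc, ind_mul_ind_of_subset _ _ (hDB m)]
    have huB : ∀ j, ind P B hBmeas • u j = u j := by
      intro j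
      rw [hu]
      simp only
      rw [Finset.smul_sum]
      apply Finset.sum_congr rfl
      intro i _
      rw [← mul_smul, hγB j i]
    -- the generation hypothesis over `B` for the induction hypothesis
    have hgenB : ∀ v : V, ∃ η : Fin n → (Ω →ₘ[P] ℝ),
        ind P B hBmeas • v = ∑ j, η j • (ind P B hBmeas • u j) := by
      intro v
      obtain ⟨ξ, hξ⟩ := hw v
      set seqη : Fin n → ℕ → (Ω →ₘ[P] ℝ) := fun j m' =>
        Nat.casesOn m' 0
          (fun m => ξ ((kr m).succAbove j) + ξ (kr m) * c m ((kr m).succAbove j)) with hseqη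
      have hηex : ∀ j, ∃ θ' : Ω →ₘ[P] ℝ, ∀ m',
          ind P (D' m') (hD'meas m') * θ' = ind P (D' m') (hD'meas m') * seqη j m' :=
        fun j => exists_glue D' hD'meas hD'cov' hD'disj (seqη j)
      choose η hη using hηex
      refine ⟨η, ?_⟩
      have key : ind P B hBmeas • v = ∑ j, η j • u j := by
        apply hV
        refine ⟨D', hD'meas, hD'disj, hD'cov, ?_⟩
        intro m'
        cases m' with
        | zero =>
          have hL : ind P Bᶜ hBmeas.compl • (ind P B hBmeas • v) = 0 :=
            ind_smul_ind_smul_empty _ _ (Set.compl_inter_self B) v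
          have hR : ind P Bᶜ hBmeas.compl • (∑ j, η j • u j) = 0 := by
            rw [Finset.smul_sum]
            apply Finset.sum_eq_zero
            intro j _
            rw [smul_comm_l0, hinduC j, smul_zero]
          show ind P Bᶜ hBmeas.compl • (ind P B hBmeas • v)
              = ind P Bᶜ hBmeas.compl • (∑ j, η j • u j)
          rw [hL, hR]
        | succ m =>
          show iD m • (ind P B hBmeas • v) = iD m • (∑ j, η j • u j)
          have hL : iD m • (ind P B hBmeas • v)
              = ∑ j, (iD m * seqη j (m+1)) • (e • w ((kr m).succAbove j)) := by
            calc iD m • (ind P B hBmeas • v) = iD m • v :=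
                  ind_smul_ind_smul_of_subset _ _ (hDB m) v
              _ = iD m • (e • v) := (ind_smul_ind_smul_of_subset _ _ (hDG m) v).symm
              _ = iD m • (∑ i, ξ i • (e • w i)) := by rw [hξ]
              _ = ∑ i, (iD m * ξ i) • (e • w i) := by
                  rw [Finset.smul_sum]
                  exact Finset.sum_congr rfl (fun i _ => (mul_smul _ _ _).symm)
              _ = (iD m * ξ (kr m)) • (e • w (kr m))
                  + ∑ j, (iD m * ξ ((kr m).succAbove j)) • (e • w ((kr m).succAbove j)) :=
                  Fin.sum_univ_succAbove _ (kr m)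
              _ = ∑ j, (iD m * seqη j (m+1)) • (e • w ((kr m).succAbove j)) := by
                  have h5 : (iD m * ξ (kr m)) • (e • w (kr m))
                      = ∑ j, (iD m * (ξ (kr m) * c m ((kr m).succAbove j)))
                          • (e • w ((kr m).succAbove j)) := by
                    rw [mul_comm (iD m) (ξ (kr m)), mul_smul, helim m, Finset.smul_sum]
                    apply Finset.sum_congr rfl
                    intro j _
                    rw [← mul_smul]
                    congr 1
                    ring
                  rw [h5, ← Finset.sum_add_distrib]
                  apply Finset.sum_congr rfl
                  intro j _
                  rw [← add_smul]
                  congr 1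
                  show iD m * (ξ (kr m) * c m ((kr m).succAbove j))
                      + iD m * ξ ((kr m).succAbove j)
                      = iD m * (ξ ((kr m).succAbove j) + ξ (kr m) * c m ((kr m).succAbove j))
                  ring
          have hR : iD m • (∑ j, η j • u j)
              = ∑ j, (iD m * seqη j (m+1)) • (e • w ((kr m).succAbove j)) := by
            rw [Finset.smul_sum]
            apply Finset.sum_congr rfl
            intro j _
            calc iD m • (η j • u j) = (iD m * η j) • u j := (mul_smul _ _ _).symm
              _ = (iD m * seqη j (m+1)) • u j := by rw [hη j (m+1)]
              _ = seqη j (m+1) • (iD m • u j) := by rw [mul_comm, mul_smul]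
              _ = seqη j (m+1) • (iD m • (e • w ((kr m).succAbove j))) := by rw [hindu m j]
              _ = (iD m * seqη j (m+1)) • (e • w ((kr m).succAbove j)) := by
                  rw [← mul_smul, mul_comm]
          rw [hL, hR]
      rw [key]
      apply Finset.sum_congr rfl
      intro j _
      rw [huB j]
    obtain ⟨A', hA', hdisj', hcup', hrank'⟩ := IH B hBmeas u hgenB
    have hA'B : ∀ j, A' j ⊆ B := fun j => hcup' ▸ Set.subset_iUnion A' j
    -- the top piece
    set F : Set Ω := G \ B with hFdef
    have hFmeas : MeasurableSet F := hG.diff hBmeas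
    have hFG : F ⊆ G := Set.diff_subset
    have hrankF : FreeRankOn P V F hFmeas (n+1) := by
      refine ⟨fun i => ind P F hFmeas • (e • w i), fun i => ?_, fun v => ?_, ?_⟩
      · rw [ind_smul_ind_smul_of_subset _ _ (subset_refl F)]
      · obtain ⟨ξ, hξ⟩ := hw v
        refine ⟨ξ, ?_⟩
        calc ind P F hFmeas • v = ind P F hFmeas • (e • v) :=
              (ind_smul_ind_smul_of_subset _ _ hFG v).symm
          _ = ind P F hFmeas • ∑ i, ξ i • (e • w i) := by rw [hξ]
          _ = ∑ i, ξ i • (ind P F hFmeas • (e • w i)) := by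
              rw [Finset.smul_sum]
              exact Finset.sum_congr rfl (fun i _ => smul_comm_l0 _ _ _)
      · intro ξ hξ0 j
        set ζ : Fin (n+1) → (Ω →ₘ[P] ℝ) := fun i => ind P F hFmeas * ξ i with hζ
        have hζrel : ∑ i, ζ i • (e • w i) = 0 := by
          rw [← hξ0]
          apply Finset.sum_congr rfl
          intro i _
          show (ind P F hFmeas * ξ i) • (e • w i) = ξ i • (ind P F hFmeas • (e • w i))
          rw [mul_smul, smul_comm_l0]
        set C' : Set Ω := ((⇑(ζ j)) ⁻¹' {0}ᶜ) ∩ F with hC'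
        have hC'meas : MeasurableSet C' :=
          ((ζ j).measurable (measurableSet_singleton (0:ℝ)).compl).inter hFmeas
        have hC'𝒞 : C' ∈ 𝒞 := by
          refine ⟨hC'meas, Set.inter_subset_right.trans Set.diff_subset, ζ, j, hζrel, ?_⟩
          intro ω hω
          exact hω.1
        have hC'B : P (C' \ B) = 0 := hCmax C' hC'𝒞 hC'meas
        have hC'null : P C' = 0 := by
          have hCB : C' \ B = C' := Set.ext fun ω => ⟨fun h => h.1, fun h => ⟨h, h.2.2⟩⟩
          rw [← hCB]
          exact hC'B
        show ζ j = 0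
        apply AEEqFun.ext
        have hid : ind P F hFmeas * ζ j = ζ j := by
          show ind P F hFmeas * (ind P F hFmeas * ξ j) = ind P F hFmeas * ξ j
          rw [← mul_assoc, ind_mul_ind_of_subset _ _ (subset_refl F)]
        have hcoe : ⇑(ζ j) =ᵐ[P] ⇑(ind P F hFmeas * ζ j) := by rw [hid]
        filter_upwards [hcoe, AEEqFun.coeFn_mul (ind P F hFmeas) (ζ j), coeFn_ind F hFmeas,
          AEEqFun.coeFn_zero (α := Ω) (μ := P) (β := ℝ),
          measure_eq_zero_iff_ae_notMem.mp hC'null] with ω e1 e2 e3 e4 e5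
        rw [e4]
        simp only [Pi.zero_apply]
        by_cases hω : ω ∈ F
        · by_contra hne
          exact e5 ⟨hne, hω⟩
        · rw [e1, e2]
          simp only [Pi.mul_apply, e3]
          rw [Set.indicator_of_notMem hω, zero_mul]
    -- assemble the final partition
    set Afin : Fin (n+2) → Set Ω := Fin.snoc A' F with hAfin
    have hAmeas : ∀ i : Fin (n+2), MeasurableSet (Afin i) := by
      intro i
      induction i using Fin.lastCases with
      | last => rw [hAfin, Fin.snoc_last]; exact hFmeas
      | cast j => rw [hAfin, Fin.snoc_castSucc]; exact hA' j
    refine ⟨Afin, hAmeas, ?_, ?_, ?_⟩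
    · intro i j
      induction i using Fin.lastCases with
      | last =>
        induction j using Fin.lastCases with
        | last => intro hij; exact absurd rfl hij
        | cast j' =>
          intro _
          rw [hAfin, Fin.snoc_last, Fin.snoc_castSucc]
          apply Set.eq_empty_of_subset_empty
          rintro ω ⟨h1, h2⟩
          exact absurd (hA'B j' h2) h1.2
      | cast i' =>
        induction j using Fin.lastCases with
        | last =>
          intro _
          rw [hAfin, Fin.snoc_last, Fin.snoc_castSucc]
          apply Set.eq_empty_of_subset_empty
          rintro ω ⟨h1, h2⟩
          exact absurd (hA'B i' h1) h2.2
        | cast j' =>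
          intro hij
          rw [hAfin, Fin.snoc_castSucc, Fin.snoc_castSucc]
          exact hdisj' i' j' (fun h => hij (congrArg Fin.castSucc h))
    · ext ω
      simp only [Set.mem_iUnion]
      constructor
      · rintro ⟨i, hi⟩
        revert hi
        refine Fin.lastCases ?_ ?_ i
        · rw [hAfin, Fin.snoc_last]; exact fun hi => hi.1
        · intro j; rw [hAfin, Fin.snoc_castSucc]; exact fun hi => hBG (hA'B j hi)
      · intro hω
        by_cases hB : ω ∈ B
        · rw [← hcup'] at hB
          obtain ⟨j, hj⟩ := Set.mem_iUnion.mp hB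
          exact ⟨Fin.castSucc j, by rw [hAfin, Fin.snoc_castSucc]; exact hj⟩
        · exact ⟨Fin.last _, by rw [hAfin, Fin.snoc_last]; exact ⟨hω, hB⟩⟩
    · intro i
      induction i using Fin.lastCases with
      | last => exact freeRankOn_congr (by rw [hAfin, Fin.snoc_last]) hrankF
      | cast j => exact freeRankOn_congr (by rw [hAfin, Fin.snoc_castSucc]) (hrank' j)

end L0

namespace L0

lemma freeRankOn_mono {V : Type*} [AddCommGroup V] [Module (Ω →ₘ[P] ℝ) V]
    {A C : Set Ω} (hA : MeasurableSet A) (hC : MeasurableSet C)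
    (hsub : C ⊆ A) {k : ℕ} (h : FreeRankOn P V A hA k) : FreeRankOn P V C hC k := by
  obtain ⟨v, hv1, hv2, hv3⟩ := h
  refine ⟨fun j => ind P C hC • v j, fun j => ?_, fun u => ?_, fun ξ hξ j => ?_⟩
  · rw [ind_smul_ind_smul_of_subset _ _ (subset_refl C)]
  · obtain ⟨ξ, hξ⟩ := hv2 u
    refine ⟨ξ, ?_⟩
    calc ind P C hC • u = ind P C hC • (ind P A hA • u) :=
        (ind_smul_ind_smul_of_subset _ _ hsub u).symm
      _ = ind P C hC • (∑ j, ξ j • v j) := by rw [hξ]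
      _ = ∑ j, ξ j • (ind P C hC • v j) := by
          rw [Finset.smul_sum]
          exact Finset.sum_congr rfl fun j _ => smul_comm_l0 _ _ _
  · have h0 : ∑ j', (ind P C hC * ξ j') • v j' = 0 := by
      rw [← hξ]
      apply Finset.sum_congr rfl
      intro j' _
      rw [mul_comm, mul_smul, smul_comm_l0]
    have hz := hv3 _ h0 j
    have h2 : ind P C hC * ξ j = ind P C hC * (ind P A hA * (ind P C hC * ξ j)) := by
      rw [show ind P C hC * (ind P A hA * (ind P C hC * ξ j))
            = (ind P C hC * ind P A hA) * (ind P C hC * ξ j) from by ring,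
          ind_mul_ind_of_subset _ _ hsub,
          show ind P C hC * (ind P C hC * ξ j) = (ind P C hC * ind P C hC) * ξ j from by ring,
          ind_mul_ind_of_subset _ _ (subset_refl C)]
    rw [h2, hz, mul_zero]

lemma freeRankOn_le {V : Type*} [AddCommGroup V] [Module (Ω →ₘ[P] ℝ) V]
    {A : Set Ω} (hA : MeasurableSet A) (hpos : P A ≠ 0)
    {k l : ℕ} (hk : FreeRankOn P V A hA k) (hl : FreeRankOn P V A hA l) : k ≤ l := by
  classical
  obtain ⟨v, hv1, hv2, hv3⟩ := hk
  obtain ⟨y, hy1, hy2, hy3⟩ := hl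
  set R := Ω →ₘ[P] ℝ with hR
  set e : R := ind P A hA with he
  have hee : e * e = e := ind_mul_ind_of_subset _ _ (subset_refl A)
  set I : Ideal R := Ideal.span {1 - e} with hI
  haveI hnt : Nontrivial (R ⧸ I) := by
    refine Ideal.Quotient.nontrivial_iff.mpr (fun htop => ?_)
    have h1 : (1 : R) ∈ I := htop ▸ Submodule.mem_top
    obtain ⟨a, ha⟩ := Ideal.mem_span_singleton'.mp h1
    have he0 : e = 0 := by
      calc e = (a * (1 - e)) * e := by rw [ha, one_mul]
        _ = a * (e - e * e) := by ring
        _ = 0 := by rw [hee, sub_self, mul_zero]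
    exact hpos ((ind_eq_zero_iff A hA).mp he0)
  set W : Submodule R V := LinearMap.range (LinearMap.lsmul R V e) with hW
  have hmemW : ∀ x : V, e • x = x → x ∈ W := fun x hx => ⟨x, hx⟩
  have htor0 : Module.IsTorsionBySet R W {1 - e} := by
    rintro ⟨x, z, hz⟩ ⟨a, ha⟩
    simp only [Set.mem_singleton_iff] at ha
    subst ha
    apply Subtype.ext
    show (1 - e) • x = 0
    have : x = e • z := hz.symm
    rw [this, ← mul_smul, sub_mul, one_mul, hee, sub_self, zero_smul]
  have htor : Module.IsTorsionBySet R W I :=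
    (Module.isTorsionBySet_iff_is_torsion_by_span _).mp htor0
  letI : Module (R ⧸ I) W := htor.module
  set vW : Fin k → W := fun j => ⟨v j, hmemW _ (hv1 j)⟩ with hvW
  set yW : Fin l → W := fun j => ⟨y j, hmemW _ (hy1 j)⟩ with hyW
  have hspan : Submodule.span (R ⧸ I) (Set.range yW) = ⊤ := by
    rw [Submodule.eq_top_iff']
    intro x
    obtain ⟨z, hz⟩ := x.2
    have hex : e • (x : V) = (x : V) := by
      conv_lhs => rw [← hz]
      show e • e • z = _
      rw [← mul_smul, hee]
      exact hz
    obtain ⟨ξ, hξ⟩ := hy2 (x : V)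
    have hxe : (x : V) = ∑ j, ξ j • y j := by rw [← hξ, hex]
    have hxW : x = ∑ j, (Ideal.Quotient.mk I (ξ j)) • yW j := by
      apply Subtype.ext
      rw [AddSubmonoidClass.coe_finset_sum]
      rw [hxe]
      apply Finset.sum_congr rfl
      intro j _
      rw [htor.mk_smul]
      rfl
    rw [hxW]
    exact Submodule.sum_mem _ fun j _ =>
      Submodule.smul_mem _ _ (Submodule.subset_span (Set.mem_range_self j))
  have hindep : LinearIndependent (R ⧸ I) vW := by
    rw [Fintype.linearIndependent_iff]
    intro g hg
    choose ξ hξmk using fun j => Ideal.Quotient.mk_surjective (I := I) (g j)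
    have hg' : ∑ j', ξ j' • v j' = 0 := by
      have hcoe : ((∑ j', g j' • vW j' : W) : V) = 0 := by rw [hg]; rfl
      rw [AddSubmonoidClass.coe_finset_sum] at hcoe
      rw [← hcoe]
      apply Finset.sum_congr rfl
      intro j' _
      rw [← hξmk j', htor.mk_smul]
      rfl
    intro j
    have h0 := hv3 ξ hg' j
    rw [← hξmk j, Ideal.Quotient.eq_zero_iff_mem]
    refine Ideal.mem_span_singleton'.mpr ⟨ξ j, ?_⟩
    rw [mul_sub, mul_one, mul_comm (ξ j) e, h0, sub_zero]
  haveI : Fintype (Set.range yW) := Set.fintypeRange _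
  have hs : Set.range vW ≤ (Submodule.span (R ⧸ I) (Set.range yW) : Set W) := by
    rw [hspan]
    intro x _
    exact Submodule.mem_top
  have hcard := linearIndependent_le_span_aux' vW hindep (Set.range yW) hs
  calc k = Fintype.card (Fin k) := (Fintype.card_fin k).symm
    _ ≤ Fintype.card (Set.range yW) := hcard
    _ ≤ Fintype.card (Fin l) := Fintype.card_range_le yW
    _ = l := Fintype.card_fin l

lemma freeRankOn_rank_eq {V : Type*} [AddCommGroup V] [Module (Ω →ₘ[P] ℝ) V]
    {A : Set Ω} (hA : MeasurableSet A) (hpos : P A ≠ 0)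
    {k l : ℕ} (hk : FreeRankOn P V A hA k) (hl : FreeRankOn P V A hA l) : k = l :=
  le_antisymm (freeRankOn_le hA hpos hk hl) (freeRankOn_le hA hpos hl hk)

end L0

end Toolkit

/-- **Structure of finitely generated regular `L⁰(𝓕)`-modules.** If the regular
`L⁰(𝓕)`-module `V` is generated by `n` elements, there is a measurable partition
`{A₀, …, A_n}` of `Ω` such that whenever `P(A_i) > 0`, `Ĩ_{A_i}·V` is a free
module of rank `i` over `Ĩ_{A_i}·L⁰(𝓕)`; moreover each such `A_i` is unique up
to `P`-null sets. -/
theorem stmt16 {Ω : Type*} [MeasurableSpace Ω] (P : Measure Ω) [IsProbabilityMeasure P]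
    {V : Type*} [AddCommGroup V] [Module (Ω →ₘ[P] ℝ) V]
    (hV : L0.IsRegular P V) (n : ℕ) (w : Fin n → V)
    (hgen : ∀ v : V, ∃ ξ : Fin n → (Ω →ₘ[P] ℝ), v = ∑ i, ξ i • w i) :
    ∃ (A : Fin (n + 1) → Set Ω) (hA : ∀ i, MeasurableSet (A i)),
      ((∀ i j, i ≠ j → A i ∩ A j = ∅) ∧ (⋃ i, A i) = Set.univ ∧
        ∀ i : Fin (n + 1), 0 < P (A i) → L0.FreeRankOn P V (A i) (hA i) i.val) ∧
      ∀ (B : Fin (n + 1) → Set Ω) (hB : ∀ i, MeasurableSet (B i)),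
        ((∀ i j, i ≠ j → B i ∩ B j = ∅) ∧ (⋃ i, B i) = Set.univ ∧
          ∀ i : Fin (n + 1), 0 < P (B i) → L0.FreeRankOn P V (B i) (hB i) i.val) →
        ∀ i : Fin (n + 1), P (symmDiff (A i) (B i)) = 0 := by
    classical
  obtain ⟨A, hA, hdisj, hcov, hrank⟩ := L0.existsPartition (P := P) hV n Set.univ
    MeasurableSet.univ w (fun v => by
      obtain ⟨ξ, hξ⟩ := hgen v
      refine ⟨ξ, ?_⟩
      rw [L0.ind_univ]
      simp only [one_smul]
      exact hξ)
  refine ⟨A, hA, ⟨hdisj, hcov, fun i _ => hrank i⟩, ?_⟩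
  rintro B hB ⟨hBdisj, hBcov, hBrank⟩ i
  have hnull : ∀ i j : Fin (n+1), i ≠ j → P (A i ∩ B j) = 0 := by
    intro i j hij
    by_contra hpos
    have hApos : 0 < P (A i) :=
      pos_iff_ne_zero.mpr (fun h => hpos (measure_mono_null Set.inter_subset_left h))
    have hBpos : 0 < P (B j) :=
      pos_iff_ne_zero.mpr (fun h => hpos (measure_mono_null Set.inter_subset_right h))
    have hk := L0.freeRankOn_mono (hA i) ((hA i).inter (hB j))
      Set.inter_subset_left (hrank i)
    have hl := L0.freeRankOn_mono (hB j) ((hA i).inter (hB j))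
      Set.inter_subset_right (hBrank j hBpos)
    exact hij (Fin.ext (L0.freeRankOn_rank_eq ((hA i).inter (hB j)) hpos hk hl))
  rw [Set.symmDiff_def]
  apply measure_union_null
  · have hsub : A i \ B i ⊆ ⋃ j, (if j = i then (∅ : Set Ω) else A i ∩ B j) := by
      rintro ω ⟨h1, h2⟩
      have hω : ω ∈ ⋃ j, B j := hBcov ▸ Set.mem_univ ω
      obtain ⟨j, hj⟩ := Set.mem_iUnion.mp hω
      refine Set.mem_iUnion.mpr ⟨j, ?_⟩
      rw [if_neg (fun h : j = i => h2 (h ▸ hj))]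
      exact ⟨h1, hj⟩
    refine measure_mono_null hsub (measure_iUnion_null fun j => ?_)
    by_cases h : j = i
    · simp [h]
    · simp only [if_neg h]
      exact hnull i j (fun hc => h (by rw [hc]))
  · have hsub : B i \ A i ⊆ ⋃ j, (if j = i then (∅ : Set Ω) else A j ∩ B i) := by
      rintro ω ⟨h1, h2⟩
      have hω : ω ∈ ⋃ j, A j := hcov ▸ Set.mem_univ ω
      obtain ⟨j, hj⟩ := Set.mem_iUnion.mp hω
      refine Set.mem_iUnion.mpr ⟨j, ?_⟩
      rw [if_neg (fun h : j = i => h2 (h ▸ hj))]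
      exact ⟨hj, h1⟩
    refine measure_mono_null hsub (measure_iUnion_null fun j => ?_)
    by_cases h : j = i
    · simp [h]
    · simp only [if_neg h]
      exact hnull j i h
end

section
/- Let V and V′ be any two real vector spaces with dim(V) ≥ 2. If T : V → V′ is bijective and maps each line segment to a line segment, i.e., T([x,y]) = [T(x),T(y)] for any two distinct x, y ∈ V, then T is affine, i.e., there exist a linear map S : V → V′ and b ∈ V′ such that T(x) = S(x) + b for all x ∈ V. -/
namespace FTAG

variable {V : Type*} [AddCommGroup V] [Module ℝ V]
variable {V' : Type*} [AddCommGroup V'] [Module ℝ V']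

/-- The segment from `x` to `y` (parameterized as in the statement). -/
def seg (x y : V) : Set V := {z | ∃ t : ℝ, 0 ≤ t ∧ t ≤ 1 ∧ z = t • x + (1 - t) • y}

/-- The line through `x` and `y`. -/
def line (x y : V) : Set V := {z | ∃ t : ℝ, z = t • x + (1 - t) • y}

/-- Linear independence of a pair, unfolded. -/
def Indep (x y : V) : Prop := ∀ s t : ℝ, s • x + t • y = 0 → s = 0 ∧ t = 0

lemma seg_self {z x : V} (h : z ∈ seg x x) : z = x := by
  obtain ⟨t, _, _, hz⟩ := h
  rw [hz]; module

lemma seg_sub_line {x y : V} : seg x y ⊆ line x y :=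
  fun _ ⟨t, _, _, hz⟩ => ⟨t, hz⟩

lemma indep_left_ne_zero {x y : V} (h : Indep x y) : x ≠ 0 := by
  intro h0
  have := (h 1 0 (by rw [h0]; module)).1
  norm_num at this

lemma indep_right_ne_zero {x y : V} (h : Indep x y) : y ≠ 0 := by
  intro h0
  have := (h 0 1 (by rw [h0]; module)).2
  norm_num at this

lemma indep_ne {x y : V} (h : Indep x y) : x ≠ y := by
  intro h0
  have := (h 1 (-1) (by rw [h0]; module)).1
  norm_num at this

lemma indep_add_ne_zero {x y : V} (h : Indep x y) : x + y ≠ 0 := by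
  intro h0
  have := (h 1 1 (by linear_combination (norm := module) h0)).1
  norm_num at this

lemma indep_symm {x y : V} (h : Indep x y) : Indep y x := by
  intro s t hst
  have := h t s (by linear_combination (norm := module) hst)
  exact ⟨this.2, this.1⟩

lemma indep_neg_left {x y : V} (h : Indep x y) : Indep (-x) y := by
  intro s t hst
  have := h (-s) t (by linear_combination (norm := module) hst)
  exact ⟨by simpa using this.1, this.2⟩

lemma indep_neg_right {x y : V} (h : Indep x y) : Indep x (-y) := by
  intro s t hst
  have := h s (-t) (by linear_combination (norm := module) hst)
  exact ⟨this.1, by simpa using this.2⟩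

lemma indep_neg_both {x y : V} (h : Indep x y) : Indep (-x) (-y) :=
  indep_neg_right (indep_neg_left h)

/-- From two independent vectors, every nonzero vector has an independent companion. -/
lemma exists_indep {x : V} (hdim : ∃ u v : V, Indep u v) (hx : x ≠ 0) :
    ∃ z : V, Indep x z := by
  obtain ⟨u, v, huv⟩ := hdim
  by_cases h : Indep x u
  · exact ⟨u, h⟩
  · rw [Indep] at h; push_neg at h
    obtain ⟨s, t, hst, hne⟩ := h
    have ht : t ≠ 0 := by
      intro h0
      rw [h0] at hst
      have hsx : s • x = 0 := by linear_combination (norm := module) hst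
      rcases smul_eq_zero.mp hsx with h' | h'
      · exact hne h' h0
      · exact hx h'
    have hu : u = (-(s/t)) • x := by
      have h1 : t • u = (-s) • x := by linear_combination (norm := module) hst
      have h2 : u = t⁻¹ • (t • u) := by rw [smul_smul, inv_mul_cancel₀ ht, one_smul]
      rw [h2, h1, smul_smul]
      congr 1
      field_simp
    refine ⟨v, ?_⟩
    intro s' t' hst'
    by_cases ht' : t' = 0
    · refine ⟨?_, ht'⟩
      rw [ht'] at hst'
      have hsx : s' • x = 0 := by linear_combination (norm := module) hst'
      rcases smul_eq_zero.mp hsx with h' | h'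
      · exact h'
      · exact absurd h' hx
    · -- v is a multiple of x, so u, v are both multiples of x: contradiction
      have hv : v = (-(s'/t')) • x := by
        have h1 : t' • v = (-s') • x := by linear_combination (norm := module) hst'
        have h2 : v = t'⁻¹ • (t' • v) := by rw [smul_smul, inv_mul_cancel₀ ht', one_smul]
        rw [h2, h1, smul_smul]
        congr 1
        field_simp
      set c : ℝ := -(s/t) with hc
      set c' : ℝ := -(s'/t') with hc'
      have h3 : c' • u + (-c) • v = 0 := by
        rw [hu, hv]
        module
      obtain ⟨h4, h5⟩ := huv c' (-c) h3
      have hu0 : u = 0 := by rw [hu, neg_eq_zero.mp h5, zero_smul]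
      exact absurd hu0 (indep_left_ne_zero huv)

section Transfer

variable {f : V → V'}

lemma seg_fwd (hb : Function.Bijective f)
    (hs : ∀ x y : V, x ≠ y → f '' seg x y = seg (f x) (f y))
    {z x y : V} (hz : z ∈ seg x y) : f z ∈ seg (f x) (f y) := by
  rcases eq_or_ne x y with rfl | hne
  · rw [seg_self hz]
    exact ⟨1, zero_le_one, le_refl 1, by module⟩
  · rw [← hs x y hne]
    exact Set.mem_image_of_mem f hz

lemma line_fwd (hb : Function.Bijective f)
    (hs : ∀ x y : V, x ≠ y → f '' seg x y = seg (f x) (f y))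
    {z x y : V} (hxy : x ≠ y) (hz : z ∈ line x y) :
    f z ∈ line (f x) (f y) := by
  obtain ⟨t, hz⟩ := hz
  by_cases h01 : 0 ≤ t ∧ t ≤ 1
  · exact seg_sub_line (seg_fwd hb hs ⟨t, h01.1, h01.2, hz⟩)
  rcases lt_or_ge t 0 with ht | ht
  · -- t < 0 : y lies in seg z x
    have h1t : (0:ℝ) < 1 - t := by linarith
    have hzx : z ≠ x := by
      intro h
      apply hxy
      have hd : (1 - t) • (x - y) = x - z := by rw [hz]; module
      rw [h, sub_self] at hd
      rcases smul_eq_zero.mp hd with h' | h'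
      · exact absurd h' (by linarith)
      · exact sub_eq_zero.mp h'
    have hy : y ∈ seg z x := by
      refine ⟨1/(1-t), by positivity, ?_, ?_⟩
      · rw [div_le_one h1t]; linarith
      · rw [hz]; match_scalars <;> field_simp <;> ring
    obtain ⟨u, hu0, hu1, hu⟩ := seg_fwd hb hs hy
    have hune : u ≠ 0 := by
      intro h
      rw [h] at hu
      simp only [zero_smul, zero_add, sub_zero, one_smul] at hu
      exact hxy (hb.1 hu).symm
    refine ⟨1 - 1/u, ?_⟩
    have key : f z = (1 - 1/u) • f x + (1/u) • f y := by
      have h2 : u • f z = f y - (1-u) • f x := by rw [hu]; module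
      have h3 : f z = u⁻¹ • (u • f z) := by rw [smul_smul, inv_mul_cancel₀ hune, one_smul]
      rw [h3, h2]
      match_scalars <;> field_simp <;> ring
    rw [key]; module
  · -- t > 1 : x lies in seg z y
    have ht1 : (1:ℝ) < t := by
      rcases lt_or_ge 1 t with h | h
      · exact h
      · exact absurd ⟨ht, h⟩ h01
    have ht0 : t ≠ 0 := by linarith
    have hzy : z ≠ y := by
      intro h
      apply hxy
      have hd : t • (y - x) = y - z := by rw [hz]; module
      rw [h, sub_self] at hd
      rcases smul_eq_zero.mp hd with h' | h'
      · exact absurd h' ht0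
      · exact (sub_eq_zero.mp h').symm
    have hx : x ∈ seg z y := by
      refine ⟨1/t, by positivity, ?_, ?_⟩
      · rw [div_le_one (by linarith)]; linarith
      · rw [hz]; match_scalars <;> field_simp <;> ring
    obtain ⟨u, hu0, hu1, hu⟩ := seg_fwd hb hs hx
    have hune : u ≠ 0 := by
      intro h
      rw [h] at hu
      simp only [zero_smul, zero_add, sub_zero, one_smul] at hu
      exact hxy (hb.1 hu)
    refine ⟨1/u, ?_⟩
    have key : f z = (1/u) • f x + (1 - 1/u) • f y := by
      have h2 : u • f z = f x - (1-u) • f y := by rw [hu]; module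
      have h3 : f z = u⁻¹ • (u • f z) := by rw [smul_smul, inv_mul_cancel₀ hune, one_smul]
      rw [h3, h2]
      match_scalars <;> field_simp <;> ring
    exact key

lemma inv_hs (hb : Function.Bijective f)
    (hs : ∀ x y : V, x ≠ y → f '' seg x y = seg (f x) (f y)) :
    ∀ x' y' : V', x' ≠ y' →
      (Equiv.ofBijective f hb).symm '' seg x' y'
        = seg ((Equiv.ofBijective f hb).symm x') ((Equiv.ofBijective f hb).symm y') := by
  intro x' y' hne
  set e := Equiv.ofBijective f hb with he
  have h1 : e.symm x' ≠ e.symm y' := fun h => hne (e.symm.injective h)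
  have h2 := hs (e.symm x') (e.symm y') h1
  have h3 : f (e.symm x') = x' := e.apply_symm_apply x'
  have h4 : f (e.symm y') = y' := e.apply_symm_apply y'
  rw [h3, h4] at h2
  rw [← h2, Set.image_image]
  have h5 : ∀ z : V, e.symm (f z) = z := fun z => e.symm_apply_apply z
  simp only [h5, Set.image_id']

lemma line_bwd (hb : Function.Bijective f)
    (hs : ∀ x y : V, x ≠ y → f '' seg x y = seg (f x) (f y))
    {z x y : V} (hxy : x ≠ y) (h : f z ∈ line (f x) (f y)) : z ∈ line x y := by
  set e := Equiv.ofBijective f hb with he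
  have hne : f x ≠ f y := fun h' => hxy (hb.1 h')
  have h2 := line_fwd e.symm.bijective (inv_hs hb hs) hne h
  have h3 : ∀ w : V, e.symm (f w) = w := fun w => e.symm_apply_apply w
  rwa [h3, h3, h3] at h2

end Transfer

section Main

variable {f : V → V'}

/-- Independent vectors map to independent vectors. -/
lemma image_indep (hb : Function.Bijective f)
    (hs : ∀ x y : V, x ≠ y → f '' seg x y = seg (f x) (f y)) (hf0 : f 0 = 0)
    {x y : V} (h : Indep x y) : Indep (f x) (f y) := by
  intro s t hst
  have hx0 : x ≠ 0 := indep_left_ne_zero h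
  have hy0 : y ≠ 0 := indep_right_ne_zero h
  have hfx0 : f x ≠ 0 := fun h' => hx0 (hb.1 (h'.trans hf0.symm))
  by_cases ht : t = 0
  · refine ⟨?_, ht⟩
    rw [ht] at hst
    have hsx : s • f x = 0 := by linear_combination (norm := module) hst
    rcases smul_eq_zero.mp hsx with h' | h'
    · exact h'
    · exact absurd h' hfx0
  · exfalso
    have hmem : f y ∈ line (f 0) (f x) := by
      refine ⟨1 + s/t, ?_⟩
      rw [hf0]
      have h1 : t • f y = (-s) • f x := by linear_combination (norm := module) hst
      have h2 : f y = t⁻¹ • (t • f y) := by rw [smul_smul, inv_mul_cancel₀ ht, one_smul]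
      rw [h2, h1]
      match_scalars <;> field_simp <;> ring
    have h3 : y ∈ line 0 x := line_bwd hb hs (Ne.symm hx0) hmem
    obtain ⟨t2, ht2⟩ := h3
    have h4 : (-(1 - t2)) • x + (1:ℝ) • y = 0 := by linear_combination (norm := module) ht2
    have := (h _ _ h4).2
    norm_num at this

/-- The key additivity on independent pairs, via the parallelogram argument. -/
lemma key_add (hb : Function.Bijective f)
    (hs : ∀ x y : V, x ≠ y → f '' seg x y = seg (f x) (f y)) (hf0 : f 0 = 0)
    {x y : V} (h : Indep x y) : f (x + y) = f x + f y := by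
  have hx0 : x ≠ 0 := indep_left_ne_zero h
  have hy0 : y ≠ 0 := indep_right_ne_zero h
  have hxy : x ≠ y := indep_ne h
  have hxy0 : x + y ≠ 0 := indep_add_ne_zero h
  have hyxy : y ≠ x + y := by
    intro h'
    apply hx0
    have : (1:ℝ) • x = 0 := by linear_combination (norm := module) -h'
    simpa using this
  have hxxy : x ≠ x + y := by
    intro h'
    apply hy0
    have : (1:ℝ) • y = 0 := by linear_combination (norm := module) -h'
    simpa using this
  set m : V := ((1:ℝ)/2) • (x + y) with hm
  have hm0 : m ≠ 0 := by
    intro h'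
    apply hxy0
    rcases smul_eq_zero.mp h' with h'' | h''
    · norm_num at h''
    · exact h''
  have hm1 : m ∈ seg x y := ⟨1/2, by norm_num, by norm_num, by rw [hm]; module⟩
  have hm2 : m ∈ seg 0 (x + y) := ⟨1/2, by norm_num, by norm_num, by rw [hm]; module⟩
  obtain ⟨s, hs0, hs1, hfm1⟩ := seg_fwd hb hs hm1
  obtain ⟨r', hr'0, hr'1, hfm2⟩ := seg_fwd hb hs hm2
  rw [hf0] at hfm2
  have hfm0 : f m ≠ 0 := fun h' => hm0 (hb.1 (h'.trans hf0.symm))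
  have hr : (1:ℝ) - r' ≠ 0 := by
    intro h'
    apply hfm0
    rw [hfm2, h']
    module
  set α : ℝ := (1 - r')⁻¹ * s with hα
  set β : ℝ := (1 - r')⁻¹ * (1 - s) with hβ
  have hc : f (x + y) = α • f x + β • f y := by
    have h5 : (1 - r') • f (x + y) = s • f x + (1 - s) • f y := by
      linear_combination (norm := module) hfm1 - hfm2
    have h6 : f (x + y) = (1 - r')⁻¹ • ((1 - r') • f (x + y)) := by
      rw [smul_smul, inv_mul_cancel₀ hr, one_smul]
    rw [h6, h5]
    module
  -- β = 1 via disjointness of line(y, x+y) and line(0, x)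
  have hbeta : β = 1 := by
    by_contra hβ1
    have h1β : (1:ℝ) - β ≠ 0 := fun h' => hβ1 (by linarith [sub_eq_zero.mp h'])
    set p : V' := ((1-β)⁻¹ * α) • f x with hp
    have hp1 : p ∈ line (f y) (f (x + y)) := by
      refine ⟨1 - (1-β)⁻¹, ?_⟩
      rw [hc, hp]
      match_scalars <;> field_simp <;> ring
    have hp2 : p ∈ line (f 0) (f x) := by
      refine ⟨1 - (1-β)⁻¹ * α, ?_⟩
      rw [hf0, hp]
      module
    obtain ⟨w, hw⟩ := hb.2 p
    have hw1 : w ∈ line y (x + y) := line_bwd hb hs hyxy (hw ▸ hp1)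
    have hw2 : w ∈ line 0 x := line_bwd hb hs (Ne.symm hx0) (hw ▸ hp2)
    obtain ⟨t1, ht1⟩ := hw1
    obtain ⟨t2, ht2⟩ := hw2
    have hE : t1 • y + (1 - t1) • (x + y) = t2 • (0:V) + (1 - t2) • x := by
      rw [← ht1, ← ht2]
    have h6 : (t2 - t1) • x + (1:ℝ) • y = 0 := by
      linear_combination (norm := module) hE
    have := (h _ _ h6).2
    norm_num at this
  -- α = 1 via disjointness of line(x, x+y) and line(0, y)
  have halpha : α = 1 := by
    by_contra hα1
    have h1α : (1:ℝ) - α ≠ 0 := fun h' => hα1 (by linarith [sub_eq_zero.mp h'])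
    set p : V' := ((1-α)⁻¹ * β) • f y with hp
    have hp1 : p ∈ line (f x) (f (x + y)) := by
      refine ⟨1 - (1-α)⁻¹, ?_⟩
      rw [hc, hp]
      match_scalars <;> field_simp <;> ring
    have hp2 : p ∈ line (f 0) (f y) := by
      refine ⟨1 - (1-α)⁻¹ * β, ?_⟩
      rw [hf0, hp]
      module
    obtain ⟨w, hw⟩ := hb.2 p
    have hw1 : w ∈ line x (x + y) := line_bwd hb hs hxxy (hw ▸ hp1)
    have hw2 : w ∈ line 0 y := line_bwd hb hs (Ne.symm hy0) (hw ▸ hp2)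
    obtain ⟨t1, ht1⟩ := hw1
    obtain ⟨t2, ht2⟩ := hw2
    have hE : t1 • x + (1 - t1) • (x + y) = t2 • (0:V) + (1 - t2) • y := by
      rw [← ht1, ← ht2]
    have h6 : (1:ℝ) • x + (t2 - t1) • y = 0 := by
      linear_combination (norm := module) hE
    have := (h _ _ h6).1
    norm_num at this
  rw [hc, hbeta, halpha, one_smul, one_smul]

/-- Existence of a negative scaling factor. -/
lemma neg_aux (hb : Function.Bijective f)
    (hs : ∀ x y : V, x ≠ y → f '' seg x y = seg (f x) (f y)) (hf0 : f 0 = 0)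
    {x : V} (hx : x ≠ 0) : ∃ l : ℝ, 0 < l ∧ f (-x) = (-l) • f x := by
  have hne : x ≠ -x := by
    intro h
    apply hx
    have h2 : (2:ℝ) • x = 0 := by linear_combination (norm := module) h
    rcases smul_eq_zero.mp h2 with h' | h'
    · norm_num at h'
    · exact h'
  have h0 : (0:V) ∈ seg x (-x) := ⟨1/2, by norm_num, by norm_num, by module⟩
  have h1 := seg_fwd hb hs h0
  rw [hf0] at h1
  obtain ⟨t, ht0, ht1, hteq⟩ := h1
  have hfx : f x ≠ 0 := fun h' => hx (hb.1 (h'.trans hf0.symm))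
  have hnx : -x ≠ (0:V) := fun h' => hx (neg_eq_zero.mp h')
  have hfnx : f (-x) ≠ 0 := fun h' => hnx (hb.1 (h'.trans hf0.symm))
  have ht0' : t ≠ 0 := by
    intro h
    rw [h] at hteq
    simp only [zero_smul, zero_add, sub_zero, one_smul] at hteq
    exact hfnx hteq.symm
  have ht1' : t ≠ 1 := by
    intro h
    rw [h] at hteq
    simp only [one_smul, sub_self, zero_smul, add_zero] at hteq
    exact hfx hteq.symm
  have htpos : 0 < t := lt_of_le_of_ne ht0 (Ne.symm ht0')
  have h1t : (0:ℝ) < 1 - t := by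
    rcases lt_or_eq_of_le ht1 with h' | h'
    · linarith
    · exact absurd h' ht1'
  have h1tne : (1:ℝ) - t ≠ 0 := ne_of_gt h1t
  refine ⟨t / (1 - t), by positivity, ?_⟩
  have h2 : (1 - t) • f (-x) = (-t) • f x := by
    linear_combination (norm := module) -hteq
  have h3 : f (-x) = (1-t)⁻¹ • ((1-t) • f (-x)) := by
    rw [smul_smul, inv_mul_cancel₀ h1tne, one_smul]
  rw [h3, h2, smul_smul]
  congr 1
  field_simp

/-- Consistency of the negative scaling factors across an independent pair. -/
lemma neg_consist (hb : Function.Bijective f)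
    (hs : ∀ x y : V, x ≠ y → f '' seg x y = seg (f x) (f y)) (hf0 : f 0 = 0)
    {x y : V} (hxy : Indep x y) {l1 l2 l3 : ℝ}
    (h1 : f (-x) = (-l1) • f x) (h2 : f (-y) = (-l2) • f y)
    (h3 : f (-(x+y)) = (-l3) • f (x+y)) : l1 = l3 ∧ l2 = l3 := by
  have hI' : Indep (-x) (-y) := indep_neg_both hxy
  have hadd : f (-x + -y) = f (-x) + f (-y) := key_add hb hs hf0 hI'
  have hxyadd : f (x + y) = f x + f y := key_add hb hs hf0 hxy
  have he : -(x+y) = -x + -y := by module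
  have h4 : f (-(x+y)) = f (-x) + f (-y) := by rw [he, hadd]
  rw [h3, hxyadd, h1, h2] at h4
  have hIf := image_indep hb hs hf0 hxy
  have h5 := hIf (l1 - l3) (l2 - l3) (by linear_combination (norm := module) h4)
  constructor
  · linarith [h5.1]
  · linarith [h5.2]

/-- `f` commutes with negation. -/
lemma neg_eq (hb : Function.Bijective f)
    (hs : ∀ x y : V, x ≠ y → f '' seg x y = seg (f x) (f y)) (hf0 : f 0 = 0)
    (hdim : ∃ u v : V, Indep u v) (x : V) : f (-x) = - f x := by
  by_cases hx : x = 0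
  · rw [hx, neg_zero, hf0, neg_zero]
  obtain ⟨z, hxz⟩ := exists_indep hdim hx
  have hz0 : z ≠ 0 := indep_right_ne_zero hxz
  have hnx0 : -x ≠ (0:V) := fun h' => hx (neg_eq_zero.mp h')
  have hInxz : Indep (-x) z := indep_neg_left hxz
  have hxz0 : x + z ≠ 0 := indep_add_ne_zero hxz
  have hnxz0 : -x + z ≠ 0 := indep_add_ne_zero hInxz
  obtain ⟨l1, hl1, e1⟩ := neg_aux hb hs hf0 hx
  obtain ⟨l2, hl2, e2⟩ := neg_aux hb hs hf0 hz0
  obtain ⟨l3, hl3, e3⟩ := neg_aux hb hs hf0 hxz0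
  obtain ⟨l4, hl4, e4⟩ := neg_aux hb hs hf0 hnx0
  obtain ⟨l5, hl5, e5⟩ := neg_aux hb hs hf0 hnxz0
  obtain ⟨ha1, ha2⟩ := neg_consist hb hs hf0 hxz e1 e2 e3
  obtain ⟨hb1, hb2⟩ := neg_consist hb hs hf0 hInxz e4 e2 e5
  have hll : l4 = l1 := by linarith
  have hfx : f x ≠ 0 := fun h' => hx (hb.1 (h'.trans hf0.symm))
  have h7 : f x = (-l4) • ((-l1) • f x) := by
    have h7' : f (-(-x)) = (-l4) • f (-x) := e4
    rw [neg_neg, e1] at h7'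
    exact h7'
  have h8 : l4 * l1 = 1 := by
    have h9 : (l4 * l1 - 1) • f x = 0 := by linear_combination (norm := module) -h7
    rcases smul_eq_zero.mp h9 with h' | h'
    · linarith [h']
    · exact absurd h' hfx
  have hl1eq : l1 = 1 := by nlinarith
  rw [e1, hl1eq]
  module

/-- `f` commutes with natural number scaling. -/
lemma nat_smul (hb : Function.Bijective f)
    (hs : ∀ x y : V, x ≠ y → f '' seg x y = seg (f x) (f y)) (hf0 : f 0 = 0)
    (hdim : ∃ u v : V, Indep u v) :
    ∀ (n : ℕ) (x : V), f ((n:ℝ) • x) = (n:ℝ) • f x := by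
  intro n
  induction n with
  | zero => intro x; simp [hf0]
  | succ n ih =>
    intro x
    by_cases hx : x = 0
    · simp [hx, hf0]
    obtain ⟨z, hxz⟩ := exists_indep hdim hx
    have hz0 : z ≠ 0 := indep_right_ne_zero hxz
    have hcast : ((n+1 : ℕ) : ℝ) = (n:ℝ) + 1 := by push_cast; ring
    rw [hcast]
    have hIxz' : Indep x (-z) := indep_neg_right hxz
    by_cases hn : n = 0
    · subst hn
      simp only [Nat.cast_zero, zero_add, one_smul]
    · have hnR : (n:ℝ) ≠ 0 := Nat.cast_ne_zero.mpr hn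
      have hI1 : Indep ((n:ℝ) • x + z) (x - z) := by
        intro s t hst
        have h1 : (s * n + t) • x + (s - t) • z = 0 := by
          linear_combination (norm := module) hst
        obtain ⟨h2, h3⟩ := hxz _ _ h1
        have hs0 : s = 0 := by
          have : s * ((n:ℝ) + 1) = 0 := by linarith
          rcases mul_eq_zero.mp this with h' | h'
          · exact h'
          · exfalso; have : (0:ℝ) < (n:ℝ) + 1 := by positivity
            linarith
        exact ⟨hs0, by linarith⟩
      have hInz : Indep ((n:ℝ) • x) z := by
        intro s t hst
        have h1 : (s * n) • x + t • z = 0 := by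
          linear_combination (norm := module) hst
        obtain ⟨h2, h3⟩ := hxz _ _ h1
        refine ⟨?_, h3⟩
        rcases mul_eq_zero.mp h2 with h' | h'
        · exact h'
        · exact absurd h' hnR
      have e1 : ((n:ℝ) + 1) • x = ((n:ℝ) • x + z) + (x - z) := by module
      have e2 : x - z = x + (-z) := by module
      rw [e1, key_add hb hs hf0 hI1, key_add hb hs hf0 hInz, e2,
        key_add hb hs hf0 hIxz', ih x, neg_eq hb hs hf0 hdim z]
      module

/-- `f` commutes with integer scaling. -/
lemma int_smul (hb : Function.Bijective f)
    (hs : ∀ x y : V, x ≠ y → f '' seg x y = seg (f x) (f y)) (hf0 : f 0 = 0)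
    (hdim : ∃ u v : V, Indep u v) :
    ∀ (m : ℤ) (x : V), f ((m:ℝ) • x) = (m:ℝ) • f x := by
  intro m x
  obtain ⟨n, rfl | rfl⟩ := m.eq_nat_or_neg
  · rw [Int.cast_natCast]
    exact nat_smul hb hs hf0 hdim n x
  · push_cast
    have e1 : (-(n:ℝ)) • x = -((n:ℝ) • x) := by module
    rw [e1, neg_eq hb hs hf0 hdim, nat_smul hb hs hf0 hdim n x]
    module

/-- `f` commutes with rational scaling. -/
lemma rat_smul (hb : Function.Bijective f)
    (hs : ∀ x y : V, x ≠ y → f '' seg x y = seg (f x) (f y)) (hf0 : f 0 = 0)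
    (hdim : ∃ u v : V, Indep u v) :
    ∀ (q : ℚ) (x : V), f ((q:ℝ) • x) = (q:ℝ) • f x := by
  intro q x
  have hden : ((q.den : ℕ) : ℝ) ≠ 0 := Nat.cast_ne_zero.mpr q.den_nz
  have hinv : f (((q.den:ℝ))⁻¹ • x) = ((q.den:ℝ))⁻¹ • f x := by
    have h1 := nat_smul hb hs hf0 hdim q.den (((q.den:ℝ))⁻¹ • x)
    rw [smul_smul, mul_inv_cancel₀ hden, one_smul] at h1
    have h2 := congrArg (fun w => ((q.den:ℝ))⁻¹ • w) h1
    rw [smul_smul, inv_mul_cancel₀ hden, one_smul] at h2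
    exact h2.symm
  have hq : (q : ℝ) = (q.num : ℝ) * ((q.den:ℝ))⁻¹ := by
    rw [Rat.cast_def]; ring
  rw [hq]
  have e1 : ((q.num:ℝ) * ((q.den:ℝ))⁻¹) • x = (q.num:ℝ) • (((q.den:ℝ))⁻¹ • x) := by
    rw [smul_smul]
  rw [e1, int_smul hb hs hf0 hdim q.num, hinv, smul_smul]

/-- `f` commutes with real scaling: the squeeze argument. -/
lemma homog (hb : Function.Bijective f)
    (hs : ∀ x y : V, x ≠ y → f '' seg x y = seg (f x) (f y)) (hf0 : f 0 = 0)
    (hdim : ∃ u v : V, Indep u v) :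
    ∀ (t : ℝ) (x : V), f (t • x) = t • f x := by
  intro t x
  by_cases hx : x = 0
  · simp [hx, hf0]
  have hfx : f x ≠ 0 := fun h' => hx (hb.1 (h'.trans hf0.symm))
  have hrep : ∀ q1 q2 : ℚ, (q1:ℝ) < t → t < (q2:ℝ) →
      ∃ c : ℝ, (q1:ℝ) ≤ c ∧ c ≤ (q2:ℝ) ∧ f (t • x) = c • f x := by
    intro q1 q2 h1 h2
    have hq12 : (q1:ℝ) < (q2:ℝ) := lt_trans h1 h2
    have hqd : (q2:ℝ) - (q1:ℝ) ≠ 0 := by intro h'; linarith [sub_eq_zero.mp h']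
    have hne : (q1:ℝ) • x ≠ (q2:ℝ) • x := by
      intro h'
      have h3 : ((q1:ℝ) - q2) • x = 0 := by linear_combination (norm := module) h'
      rcases smul_eq_zero.mp h3 with h4 | h4
      · have : (q1:ℝ) = q2 := by linarith
        linarith
      · exact hx h4
    have hmem : t • x ∈ seg ((q1:ℝ) • x) ((q2:ℝ) • x) := by
      refine ⟨((q2:ℝ) - t)/((q2:ℝ) - q1), ?_, ?_, ?_⟩
      · apply div_nonneg <;> linarith
      · rw [div_le_one (by linarith)]; linarith
      · match_scalars
        field_simp
        ring
    have h5 := seg_fwd hb hs hmem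
    rw [rat_smul hb hs hf0 hdim q1 x, rat_smul hb hs hf0 hdim q2 x] at h5
    obtain ⟨u, hu0, hu1, hu⟩ := h5
    refine ⟨u * q1 + (1-u) * q2, by nlinarith, by nlinarith, by rw [hu]; module⟩
  obtain ⟨qa, hqa1, hqa2⟩ := exists_rat_btwn (sub_one_lt t)
  obtain ⟨qb, hqb1, hqb2⟩ := exists_rat_btwn (lt_add_one t)
  obtain ⟨c, _, _, hc⟩ := hrep qa qb hqa2 hqb1
  have huniq : ∀ c' : ℝ, f (t • x) = c' • f x → c' = c := by
    intro c' hc'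
    have h7 : (c' - c) • f x = 0 := by linear_combination (norm := module) hc - hc'
    rcases smul_eq_zero.mp h7 with h' | h'
    · linarith [h']
    · exact absurd h' hfx
  have hct : c = t := by
    by_contra hne
    rcases lt_or_gt_of_ne hne with hlt | hgt
    · obtain ⟨q, hq1, hq2⟩ := exists_rat_btwn hlt
      obtain ⟨c', hc'1, _, hc'⟩ := hrep q qb hq2 hqb1
      have := huniq c' hc'
      linarith
    · obtain ⟨q, hq1, hq2⟩ := exists_rat_btwn hgt
      obtain ⟨c', _, hc'2, hc'⟩ := hrep qa q hqa2 hq1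
      have := huniq c' hc'
      linarith
  rw [hc, hct]

/-- `f` is additive. -/
lemma add_all (hb : Function.Bijective f)
    (hs : ∀ x y : V, x ≠ y → f '' seg x y = seg (f x) (f y)) (hf0 : f 0 = 0)
    (hdim : ∃ u v : V, Indep u v) :
    ∀ u v : V, f (u + v) = f u + f v := by
  intro u v
  by_cases h : Indep u v
  · exact key_add hb hs hf0 h
  rw [Indep] at h
  push_neg at h
  obtain ⟨s, t, hst, hor⟩ := h
  by_cases hu : u = 0
  · rw [hu, zero_add, hf0, zero_add]
  have ht : t ≠ 0 := by
    intro h'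
    rw [h'] at hst
    have hsx : s • u = 0 := by linear_combination (norm := module) hst
    rcases smul_eq_zero.mp hsx with h'' | h''
    · exact hor h'' h'
    · exact hu h''
  have hv : v = (-(s/t)) • u := by
    have h1 : t • v = (-s) • u := by linear_combination (norm := module) hst
    have h2 : v = t⁻¹ • (t • v) := by rw [smul_smul, inv_mul_cancel₀ ht, one_smul]
    rw [h2, h1, smul_smul]
    congr 1
    field_simp
  rw [hv]
  have e : u + (-(s/t)) • u = (1 + -(s/t)) • u := by module
  rw [e, homog hb hs hf0 hdim, homog hb hs hf0 hdim]
  module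

end Main

end FTAG

/-- **The fundamental theorem of affine geometry** (infinite-dimensional version):
if `V, V'` are real vector spaces, `dim V ≥ 2`, and `T : V → V'` is bijective and
maps each line segment to a line segment, then `T` is affine. -/
theorem stmt19 {V V' : Type*} [AddCommGroup V] [Module ℝ V]
    [AddCommGroup V'] [Module ℝ V']
    (hdim : ∃ u v : V, LinearIndependent ℝ ![u, v])
    (T : V → V') (hbij : Function.Bijective T)
    (hseg : ∀ x y : V, x ≠ y →
      T '' {z : V | ∃ t : ℝ, 0 ≤ t ∧ t ≤ 1 ∧ z = t • x + (1 - t) • y}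
        = {z : V' | ∃ t : ℝ, 0 ≤ t ∧ t ≤ 1 ∧ z = t • T x + (1 - t) • T y}) :
    ∃ (S : V →ₗ[ℝ] V') (b : V'), ∀ x : V, T x = S x + b := by
  classical
  set f : V → V' := fun x => T x - T 0 with hfdef
  have hfb : Function.Bijective f := (Equiv.subRight (T 0)).bijective.comp hbij
  have hf0 : f 0 = 0 := sub_self _
  have hfs : ∀ x y : V, x ≠ y → f '' FTAG.seg x y = FTAG.seg (f x) (f y) := by
    intro x y hxy
    have h1 : T '' FTAG.seg x y = FTAG.seg (T x) (T y) := hseg x y hxy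
    have h2 : f '' FTAG.seg x y = (fun v => v - T 0) '' (T '' FTAG.seg x y) := by
      rw [Set.image_image]
    rw [h2, h1]
    ext w
    constructor
    · rintro ⟨u, ⟨t, h0, h1', rfl⟩, rfl⟩
      exact ⟨t, h0, h1', by module⟩
    · rintro ⟨t, h0, h1', rfl⟩
      exact ⟨t • T x + (1-t) • T y, ⟨t, h0, h1', rfl⟩, by module⟩
  have hdim' : ∃ u v : V, FTAG.Indep u v := by
    obtain ⟨u, v, huv⟩ := hdim
    exact ⟨u, v, fun s t hst => LinearIndependent.pair_iff.mp huv s t hst⟩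
  refine ⟨{ toFun := f,
            map_add' := FTAG.add_all hfb hfs hf0 hdim',
            map_smul' := fun t x => FTAG.homog hfb hfs hf0 hdim' t x }, T 0, ?_⟩
  intro x
  show T x = f x + T 0
  show T x = (T x - T 0) + T 0
  abel
end
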